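/- arXiv:math/0404318 — 2 statements merged into one kernel-verified Lean document; each statement's English description precedes it below -/
import Mathlib

section
/- Assume δ ≥ κ and there exists a [δ]^{<θ}-normal ideal on P_κ(λ). Then for every A ∈ (NS^{[δ]^{<θ}}_{κ,λ})⁺, cof(NS^{[δ]^{<θ}}_{κ,λ} | A) = 𝔡^{u(θ̄·ℵ₀, |δ|)}_{κ,λ}, where θ̄·ℵ₀ denotes the cardinal product. -/
/-!
Write `τ = θ̄·ℵ₀`. The least `[δ]^{<θ}`-normal ideal consists of the sets disjoint from some
`Club g`, the points `a` closed under a function `g` on finite lists of subsets of `a ∩ δ` of size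
`< ℵ₀·|a ∩ θ|`: normality puts the complement of every such club into every normal ideal, and the
existence of a normal ideal forces `κ > ω`, which gives the countable unions needed when `a ∩ θ`
is finite. These small sets have size `< τ`, so up to covering a list of them is a finite list
from a cofinal family in `P_τ(δ)` of size `u = u(τ, |δ|)`. Indexing these lists by `u`, clubs
correspond to functions `u → P_κ(λ)`: a dominating family of functions yields a cofinal family of
clubs inside any positive `A`, and a cofinal family of clubs inside `A` yields a dominating family.
-/

open Cardinal Set

namespace PklNormal

/-- `P_κ(l)`: the collection of subsets of (the set of ordinals below) `l`
of cardinality `< κ`. -/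
def PSet (κ : Cardinal.{0}) (l : Ordinal.{0}) : Set (Set Ordinal.{0}) :=
  {a | a ⊆ Set.Iio l ∧ #↥a < Cardinal.lift.{1} κ}

/-- `e ∈ P_{|a ∩ σ|}(a ∩ γ)`. -/
def inP (σ : Cardinal.{0}) (γ : Ordinal.{0}) (a e : Set Ordinal.{0}) : Prop :=
  e ⊆ a ∩ Set.Iio γ ∧ #↥e < #↥(a ∩ Set.Iio σ.ord)

/-- The collection `I_{κ,l}` of non-cofinal subsets of `P_κ(l)`. -/
def Ikl (κ : Cardinal.{0}) (l : Ordinal.{0}) : Set (Set (Set Ordinal.{0})) :=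
  {B | B ⊆ PSet κ l ∧ ∃ a ∈ PSet κ l, ∀ b ∈ B, ¬ a ⊆ b}

/-- An ideal on `P_κ(l)`. -/
structure IsIdeal (κ : Cardinal.{0}) (l : Ordinal.{0})
    (K : Set (Set (Set Ordinal.{0}))) : Prop where
  mem_subset : ∀ B ∈ K, B ⊆ PSet κ l
  subset_mem : ∀ B ∈ K, ∀ C ⊆ B, C ∈ K
  sUnion_mem : ∀ Y ⊆ K, Y.Nonempty → #↥Y < Cardinal.lift.{1} κ → ⋃₀ Y ∈ K
  nonCofinal_subset : Ikl κ l ⊆ K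
  univ_not_mem : PSet κ l ∉ K

/-- `K⁺`: the subsets of `P_κ(l)` not in `K`. -/
def plus (κ : Cardinal.{0}) (l : Ordinal.{0}) (K : Set (Set (Set Ordinal.{0}))) :
    Set (Set (Set Ordinal.{0})) :=
  {B | B ⊆ PSet κ l ∧ B ∉ K}

/-- `K*`: the subsets of `P_κ(l)` whose complement is in `K`. -/
def star (κ : Cardinal.{0}) (l : Ordinal.{0}) (K : Set (Set (Set Ordinal.{0}))) :
    Set (Set (Set Ordinal.{0})) :=
  {B | B ⊆ PSet κ l ∧ PSet κ l \ B ∈ K}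

/-- `K|A`. -/
def restrict (κ : Cardinal.{0}) (l : Ordinal.{0}) (K : Set (Set (Set Ordinal.{0})))
    (A : Set (Set Ordinal.{0})) : Set (Set (Set Ordinal.{0})) :=
  {B | B ⊆ PSet κ l ∧ B ∩ A ∈ K}

/-- `∇^{[γ]^{<σ}} J`. -/
def nabla (κ : Cardinal.{0}) (l : Ordinal.{0}) (σ : Cardinal.{0}) (γ : Ordinal.{0})
    (J : Set (Set (Set Ordinal.{0}))) : Set (Set (Set Ordinal.{0})) :=
  {B | ∃ F : Set Ordinal.{0} → Set (Set Ordinal.{0}),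
    (∀ e ∈ PSet σ γ, F e ∈ J) ∧
    B ⊆ {a | a ∈ PSet κ l ∧ a ∩ Set.Iio σ.ord = ∅} ∪
      ⋃ e ∈ PSet σ γ, {a | a ∈ F e ∧ inP σ γ a e}}

/-- `J` is `[γ]^{<σ}`-normal. -/
def IsNormal (κ : Cardinal.{0}) (l : Ordinal.{0}) (σ : Cardinal.{0}) (γ : Ordinal.{0})
    (J : Set (Set (Set Ordinal.{0}))) : Prop :=
  J = nabla κ l σ γ J

def IsNormalIdeal (κ : Cardinal.{0}) (l : Ordinal.{0}) (σ : Cardinal.{0}) (γ : Ordinal.{0})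
    (J : Set (Set (Set Ordinal.{0}))) : Prop :=
  IsIdeal κ l J ∧ IsNormal κ l σ γ J

/-- `N` is the smallest `[γ]^{<σ}`-normal ideal on `P_κ(l)`. -/
def IsLeastNormalIdeal (κ : Cardinal.{0}) (l : Ordinal.{0}) (σ : Cardinal.{0}) (γ : Ordinal.{0})
    (N : Set (Set (Set Ordinal.{0}))) : Prop :=
  IsNormalIdeal κ l σ γ N ∧ ∀ J, IsNormalIdeal κ l σ γ J → N ⊆ J

/-- `∇^δ K`, the ordinal-indexed diagonal union. -/
def nablaOrd (κ : Cardinal.{0}) (l : Ordinal.{0}) (δ : Ordinal.{0})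
    (K : Set (Set (Set Ordinal.{0}))) : Set (Set (Set Ordinal.{0})) :=
  {B | ∃ F : Ordinal.{0} → Set (Set Ordinal.{0}),
    (∀ α < δ, F α ∈ K) ∧
    B ⊆ {a | a ∈ PSet κ l ∧ (0 : Ordinal) ∉ a} ∪
      ⋃ α ∈ Set.Iio δ, {a | a ∈ F α ∧ α ∈ a}}

/-- `J` is `δ`-normal. -/
def IsOrdNormal (κ : Cardinal.{0}) (l : Ordinal.{0}) (δ : Ordinal.{0})
    (J : Set (Set (Set Ordinal.{0}))) : Prop :=
  J = nablaOrd κ l δ J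

/-- `θ̄`: equals `θ` if `θ < κ`, or if `θ = κ` and `κ` is a limit cardinal;
equals `ν` if `θ = κ = ν⁺`. -/
noncomputable def thetaBar (κ θ : Cardinal.{0}) : Cardinal.{0} :=
  haveI := Classical.propDecidable (θ < κ ∨ Order.IsSuccLimit κ)
  if θ < κ ∨ Order.IsSuccLimit κ then θ else sSup {ν | Order.succ ν = κ}

/-- `cof(K)`: the least number of generators of `K`. -/
noncomputable def cofIdeal (K : Set (Set (Set Ordinal.{0}))) : Cardinal.{1} :=
  sInf {c | ∃ S ⊆ K, #↥S = c ∧ ∀ B ∈ K, ∃ C ∈ S, B ⊆ C}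

/-- The dominating number `𝔡^μ_{κ,l}`. -/
noncomputable def dNum (κ : Cardinal.{0}) (l : Ordinal.{0}) (μ : Cardinal.{1}) : Cardinal.{1} :=
  sInf {c | ∃ F : Set (μ.ord.ToType → Set Ordinal.{0}),
    #↥F = c ∧ (∀ f ∈ F, ∀ i, f i ∈ PSet κ l) ∧
    ∀ g : μ.ord.ToType → Set Ordinal.{0}, (∀ i, g i ∈ PSet κ l) →
      ∃ f ∈ F, ∀ i, g i ⊆ f i}

/-- `u(ρ,μ)`: the least cardinality of a cofinal subset of `(P_ρ(μ), ⊆)`. -/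
noncomputable def uNum (ρ μ : Cardinal.{0}) : Cardinal.{1} :=
  sInf {c | ∃ X ⊆ PSet ρ μ.ord, #↥X = c ∧ ∀ e ∈ PSet ρ μ.ord, ∃ x ∈ X, e ⊆ x}

/-- `cov(lam, ν, ν, 2)`: the least cardinality of an `X ⊆ P_ν(lam)` such that every
member of `P_ν(lam)` is contained in a member of `X`. -/
noncomputable def covNum (lam ν : Cardinal.{0}) : Cardinal.{1} :=
  sInf {c | ∃ X ⊆ PSet ν lam.ord, #↥X = c ∧ ∀ e ∈ PSet ν lam.ord, ∃ x ∈ X, e ⊆ x}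

/-- `C` is closed unbounded in `l`. -/
def IsClubIn (C : Set Ordinal.{0}) (l : Ordinal.{0}) : Prop :=
  C ⊆ Set.Iio l ∧ (∀ p < l, ∃ q ∈ C, p < q) ∧
    (∀ o < l, Order.IsSuccLimit o → (∀ p < o, ∃ q ∈ C, p < q ∧ q < o) → o ∈ C)

/-- `κ` is a Mahlo cardinal: the set of regular cardinals below `κ` is stationary in `κ`. -/
def IsMahlo (κ : Cardinal.{0}) : Prop :=
  ∀ C : Set Ordinal.{0}, IsClubIn C κ.ord →
    ∃ o ∈ C, ∃ ρ : Cardinal.{0}, ρ.IsRegular ∧ ρ.ord = o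

universe u

variable {κ θ : Cardinal.{0}} {l δ : Ordinal.{0}} {a b : Set Ordinal.{0}}
  {J : Set (Set (Set Ordinal.{0}))}

lemma mem_PSet_of_finite (hκ : ℵ₀ ≤ κ) (h : a ⊆ Iio l) (ha : a.Finite) : a ∈ PSet κ l :=
  ⟨h, (lt_aleph0_iff_set_finite.2 ha).trans_le (aleph0_le_lift.2 hκ)⟩

lemma union_mem_PSet (hκ : ℵ₀ ≤ κ) (ha : a ∈ PSet κ l) (hb : b ∈ PSet κ l) :
    a ∪ b ∈ PSet κ l :=
  ⟨union_subset ha.1 hb.1,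
    (mk_union_le a b).trans_lt (add_lt_of_lt (aleph0_le_lift.2 hκ) ha.2 hb.2)⟩

lemma biUnion_list_mem_PSet {α : Type*} (hκ : ℵ₀ ≤ κ) (M : List α) (f : α → Set Ordinal.{0})
    (hf : ∀ x ∈ M, f x ∈ PSet κ l) : (⋃ x ∈ M, f x) ∈ PSet κ l := by
  induction M with
  | nil => simpa using mem_PSet_of_finite hκ (empty_subset _) finite_empty
  | cons x M ih =>
    simp only [List.mem_cons, iUnion_iUnion_eq_or_left]
    exact union_mem_PSet hκ (hf x List.mem_cons_self)
      (ih fun y hy => hf y (List.mem_cons_of_mem x hy))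

lemma mk_inter_Iio_ord_le (a : Set Ordinal.{0}) : #↥(a ∩ Iio θ.ord) ≤ lift.{1} θ := by
  simpa using mk_le_mk_of_subset (inter_subset_right (s := a) (t := Iio θ.ord))

lemma pair_subset_Iio_ord (hθ2 : 2 ≤ θ) : ({0, 1} : Set Ordinal.{0}) ⊆ Iio θ.ord := by
  have h1 : (1 : Ordinal.{0}) < θ.ord := lt_ord.2 (by simpa using Cardinal.one_lt_two.trans_le hθ2)
  exact pair_subset (zero_lt_one.trans h1) h1

lemma two_le_mk_inter_of_pair_subset (hθ2 : 2 ≤ θ) (h : ({0, 1} : Set Ordinal.{0}) ⊆ a) :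
    2 ≤ #↥(a ∩ Iio θ.ord) := by
  have h01 : #↥({0, 1} : Set Ordinal.{0}) = 2 := by
    rw [mk_insert (by simp), mk_singleton, one_add_one_eq_two]
  exact h01.symm.le.trans (mk_le_mk_of_subset (subset_inter h (pair_subset_Iio_ord hθ2)))

lemma empty_mem_PSet (hκ : κ ≠ 0) : ∅ ∈ PSet κ l :=
  ⟨empty_subset _, by simpa [pos_iff_ne_zero] using hκ⟩

lemma singleton_mem_PSet (hκ : 1 < κ) {γ : Ordinal.{0}} (hγ : γ < l) : {γ} ∈ PSet κ l :=
  ⟨singleton_subset_iff.2 hγ, by simpa using hκ⟩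

lemma mk_inter_pos (h : a ∩ Iio θ.ord ≠ ∅) : 0 < #↥(a ∩ Iio θ.ord) :=
  pos_iff_ne_zero.2 (mk_ne_zero_iff.2 (nonempty_iff_ne_empty.2 h).to_subtype)

lemma nonSupersets_mem_Ikl (ha : a ∈ PSet κ l) : {b | b ∈ PSet κ l ∧ ¬ a ⊆ b} ∈ Ikl κ l :=
  ⟨fun _ hb => hb.1, a, ha, fun _ hb => hb.2⟩

namespace IsIdeal

lemma nonSupersets_mem (hJ : IsIdeal κ l J) (ha : a ∈ PSet κ l) :
    {b | b ∈ PSet κ l ∧ ¬ a ⊆ b} ∈ J :=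
  hJ.nonCofinal_subset (nonSupersets_mem_Ikl ha)

lemma union_mem (hJ : IsIdeal κ l J) (hκ : ℵ₀ ≤ κ) {B₁ B₂ : Set (Set Ordinal.{0})}
    (h₁ : B₁ ∈ J) (h₂ : B₂ ∈ J) : B₁ ∪ B₂ ∈ J := by
  rw [← sUnion_pair]
  refine hJ.sUnion_mem _ (pair_subset h₁ h₂) (insert_nonempty _ _) ?_
  exact (lt_aleph0_iff_set_finite.2 (toFinite _)).trans_le (aleph0_le_lift.2 hκ)

lemma iUnion_nat_mem (hJ : IsIdeal κ l J) (hκ : ℵ₀ < κ) {T : ℕ → Set (Set Ordinal.{0})}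
    (hT : ∀ n, T n ∈ J) : (⋃ n, T n) ∈ J := by
  rw [← sUnion_range]
  refine hJ.sUnion_mem _ (range_subset_iff.2 hT) (range_nonempty T) ?_
  exact (countable_range T).le_aleph0.trans_lt (by simpa using lift_lt.{0, 1}.2 hκ)

lemma lt_two_mem (hJ : IsIdeal κ l J) (hκ : ℵ₀ ≤ κ) (hθ2 : 2 ≤ θ) (hl : 1 < l) :
    {a | a ∈ PSet κ l ∧ #↥(a ∩ Iio θ.ord) < 2} ∈ J := by
  refine hJ.subset_mem _
    (hJ.nonSupersets_mem (a := {0, 1}) (mem_PSet_of_finite hκ ?_ (toFinite _))) _ ?_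
  · exact pair_subset (zero_lt_one.trans hl) hl
  · exact fun a ha => ⟨ha.1, fun h => (two_le_mk_inter_of_pair_subset hθ2 h).not_gt ha.2⟩

end IsIdeal

lemma IsNormal.mem_of_forall {σ : Cardinal.{0}} (hJ : IsNormal κ l σ δ J)
    {B : Set (Set Ordinal.{0})} (F : Set Ordinal.{0} → Set (Set Ordinal.{0}))
    (hF : ∀ e ∈ PSet σ δ, F e ∈ J)
    (hB : ∀ a ∈ B, (a ∈ PSet κ l ∧ a ∩ Iio σ.ord = ∅) ∨
      ∃ e ∈ PSet σ δ, a ∈ F e ∧ inP σ δ a e) : B ∈ J := by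
  rw [hJ]
  refine ⟨F, hF, fun a ha => ?_⟩
  rcases hB a ha with h | ⟨e, he, h⟩
  · exact Or.inl h
  · exact Or.inr (mem_iUnion₂.2 ⟨e, he, h⟩)

lemma subset_nabla {σ : Cardinal.{0}} (hσ : σ ≠ 0) (hJ : ∀ B ∈ J, B ⊆ PSet κ l) :
    J ⊆ nabla κ l σ δ J := by
  refine fun B hB => ⟨fun _ => B, fun _ _ => hB, fun a ha => ?_⟩
  by_cases h : a ∩ Iio σ.ord = ∅
  · exact Or.inl ⟨hJ B hB ha, h⟩
  · exact Or.inr (mem_iUnion₂.2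
      ⟨∅, empty_mem_PSet hσ, ha, empty_subset _, by simpa using mk_inter_pos h⟩)

-- For `κ = ω` normality would catch every finite `a` meeting `θ`: either `{0, 1} ⊄ a`, or
-- `γ + 1 ∉ a` for the largest natural number `γ ∈ a`, and `{γ}` is small at `a`.
lemma aleph0_lt_of_isNormalIdeal (hκ : ℵ₀ ≤ κ) (hθ2 : 2 ≤ θ) (hθκ : θ ≤ κ)
    (hωδ : Ordinal.omega0 ≤ δ) (hδl : δ ≤ l) (hJ : IsNormalIdeal κ l θ δ J) : ℵ₀ < κ := by
  refine hκ.lt_of_ne fun hκω => hJ.1.univ_not_mem ?_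
  subst hκω
  have hfin : ∀ {s : Set Ordinal.{0}} {σ : Cardinal.{0}}, σ ≤ ℵ₀ → #s < lift.{1} σ → s.Finite :=
    fun hσ hs => lt_aleph0_iff_set_finite.1 (hs.trans_le (by simpa using hσ))
  let top (e : Set Ordinal.{0}) : Set Ordinal.{0} :=
    {0, 1} ∪ Order.succ '' (e ∩ Iio Ordinal.omega0)
  refine hJ.2.mem_of_forall (fun e => {b | b ∈ PSet ℵ₀ l ∧ ¬ top e ⊆ b})
    (fun e he => hJ.1.nonSupersets_mem ?_) fun a ha => ?_
  · have htop : top e ⊆ Iio Ordinal.omega0 :=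
      union_subset (pair_subset Ordinal.omega0_pos Ordinal.one_lt_omega0)
        (image_subset_iff.2 fun γ hγ => Ordinal.isSuccLimit_omega0.succ_lt hγ.2)
    exact mem_PSet_of_finite le_rfl (htop.trans (Iio_subset_Iio (hωδ.trans hδl)))
      ((toFinite _).union (((hfin hθκ he.2).inter_of_left _).image _))
  by_cases h0 : a ∩ Iio θ.ord = ∅
  · exact Or.inl ⟨ha, h0⟩
  right
  by_cases h01 : ({0, 1} : Set Ordinal.{0}) ⊆ a
  · obtain ⟨γ, hγ, hmax⟩ := exists_max_image (a ∩ Iio Ordinal.omega0) id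
      ((hfin le_rfl ha.2).inter_of_left _) ⟨0, h01 (by simp), Ordinal.omega0_pos⟩
    have hsucc : Order.succ γ ∉ a := fun h => (Order.lt_succ γ).not_ge
      (hmax _ ⟨h, Ordinal.isSuccLimit_omega0.succ_lt hγ.2⟩)
    refine ⟨{γ}, singleton_mem_PSet (Cardinal.one_lt_two.trans_le hθ2) (hγ.2.trans_le hωδ),
      ⟨ha, fun h => hsucc (h (Or.inr ⟨γ, ⟨rfl, hγ.2⟩, rfl⟩))⟩,
      singleton_subset_iff.2 ⟨hγ.1, hγ.2.trans_le hωδ⟩, ?_⟩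
    rw [mk_singleton]
    exact Cardinal.one_lt_two.trans_le (two_le_mk_inter_of_pair_subset hθ2 h01)
  · exact ⟨∅, empty_mem_PSet (by rintro rfl; simp at hθ2),
      ⟨ha, fun h => h01 (subset_union_left.trans h)⟩, empty_subset _,
      by simpa using mk_inter_pos h0⟩

/-! ### Clubs -/

-- The factor `ℵ₀` admits every finite `c` once `|a ∩ θ| ≥ 2`: normality is then applied one
-- point at a time (`IsNormalIdeal.finite_diag_mem`).
def Good (θ : Cardinal.{0}) (δ : Ordinal.{0}) (a c : Set Ordinal.{0}) : Prop :=
  c ⊆ a ∩ Iio δ ∧ #c < ℵ₀ * #↥(a ∩ Iio θ.ord)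

def Club (κ θ : Cardinal.{0}) (l δ : Ordinal.{0}) (g : List (Set Ordinal.{0}) → Set Ordinal.{0}) :
    Set (Set Ordinal.{0}) :=
  {a | a ∈ PSet κ l ∧ ∀ L : List (Set Ordinal.{0}), (∀ c ∈ L, Good θ δ a c) → g L ⊆ a}

namespace IsNormalIdeal

lemma finite_diag_mem (hJ : IsNormalIdeal κ l θ δ J) (k : ℕ) :
    ∀ E : Set Ordinal.{0} → Set (Set Ordinal.{0}), (∀ c, E c ∈ J) →
      {a | a ∈ PSet κ l ∧ 2 ≤ #↥(a ∩ Iio θ.ord) ∧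
        ∃ s : Finset Ordinal.{0}, ↑s ⊆ a ∩ Iio δ ∧ s.card = k ∧ a ∈ E s} ∈ J := by
  induction k with
  | zero =>
    refine fun E hE => hJ.1.subset_mem _ (hE ∅) _ ?_
    rintro a ⟨-, -, s, -, hs, haE⟩
    simpa [Finset.card_eq_zero.1 hs] using haE
  | succ k ih =>
    intro E hE
    refine hJ.2.mem_of_forall _ (fun e _ => ih (fun c => E (e ∪ c)) fun c => hE _) ?_
    rintro a ⟨haP, ha2, s, hs, hcard, haE⟩
    obtain ⟨γ, hγ⟩ : s.Nonempty := Finset.card_pos.1 (by omega)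
    have hθ : (1 : Cardinal.{1}) < lift.{1} θ :=
      (Cardinal.one_lt_two.trans_le ha2).trans_le (mk_inter_Iio_ord_le a)
    refine Or.inr ⟨{γ}, singleton_mem_PSet (by simpa using hθ) (hs hγ).2,
      ⟨haP, ha2, s.erase γ, ?_, ?_, ?_⟩, singleton_subset_iff.2 (hs hγ), ?_⟩
    · exact (Finset.coe_subset.2 (Finset.erase_subset _ _)).trans hs
    · rw [Finset.card_erase_of_mem hγ, hcard, Nat.add_sub_cancel]
    · rwa [Finset.coe_erase, singleton_union, insert_sdiff_singleton,
        insert_eq_of_mem (Finset.mem_coe.2 hγ)]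
    · rw [mk_singleton]
      exact Cardinal.one_lt_two.trans_le ha2

lemma diag_good_mem (hJ : IsNormalIdeal κ l θ δ J) (hκ : ℵ₀ < κ)
    (E : Set Ordinal.{0} → Set (Set Ordinal.{0})) (hE : ∀ c, E c ∈ J) :
    {a | a ∈ PSet κ l ∧ 2 ≤ #↥(a ∩ Iio θ.ord) ∧ ∃ c, Good θ δ a c ∧ a ∈ E c} ∈ J := by
  have hinf : {a | a ∈ PSet κ l ∧ ℵ₀ ≤ #↥(a ∩ Iio θ.ord) ∧
      ∃ c, Good θ δ a c ∧ a ∈ E c} ∈ J := by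
    refine hJ.2.mem_of_forall E (fun e _ => hE e) ?_
    rintro a ⟨-, ha, c, hc, haE⟩
    have hc' : #c < #↥(a ∩ Iio θ.ord) := by simpa [aleph0_mul_eq ha] using hc.2
    exact Or.inr ⟨c, ⟨hc.1.trans inter_subset_right, hc'.trans_le (mk_inter_Iio_ord_le a)⟩,
      haE, hc.1, hc'⟩
  have hfin := hJ.1.iUnion_nat_mem hκ fun k => hJ.finite_diag_mem k E hE
  refine hJ.1.subset_mem _ (hJ.1.union_mem hκ.le hinf hfin) _ ?_
  rintro a ⟨haP, ha2, c, hc, haE⟩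
  by_cases ha : ℵ₀ ≤ #↥(a ∩ Iio θ.ord)
  · exact Or.inl ⟨haP, ha, c, hc, haE⟩
  · have hc_fin : #c < ℵ₀ := hc.2.trans_le
      ((by gcongr; exact (not_le.1 ha).le : ℵ₀ * #↥(a ∩ Iio θ.ord) ≤ ℵ₀ * ℵ₀).trans
        aleph0_mul_aleph0.le)
    obtain ⟨s, rfl⟩ := (lt_aleph0_iff_set_finite.1 hc_fin).exists_finset_coe
    exact Or.inr (mem_iUnion.2 ⟨s.card, haP, ha2, s, hc.1, rfl, haE⟩)

lemma bad_list_mem (hJ : IsNormalIdeal κ l θ δ J) (hκ : ℵ₀ < κ) (n : ℕ) :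
    ∀ g : List (Set Ordinal.{0}) → Set Ordinal.{0}, (∀ L, g L ∈ PSet κ l) →
      {a | a ∈ PSet κ l ∧ 2 ≤ #↥(a ∩ Iio θ.ord) ∧ ∃ L : List (Set Ordinal.{0}),
        L.length = n ∧ (∀ c ∈ L, Good θ δ a c) ∧ ¬ g L ⊆ a} ∈ J := by
  induction n with
  | zero =>
    refine fun g hg => hJ.1.subset_mem _ (hJ.1.nonSupersets_mem (hg [])) _ ?_
    rintro a ⟨haP, -, L, hL, -, hgL⟩
    rw [List.length_eq_zero_iff.1 hL] at hgL
    exact ⟨haP, hgL⟩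
  | succ n ih =>
    refine fun g hg => hJ.1.subset_mem _
      (hJ.diag_good_mem hκ _ fun c => ih (fun L => g (c :: L)) fun L => hg _) _ ?_
    rintro a ⟨haP, ha2, _ | ⟨c, L⟩, hL, hgood, hgL⟩
    · simp at hL
    · exact ⟨haP, ha2, c, hgood c List.mem_cons_self, haP, ha2, L, by simpa using hL,
        fun c' hc' => hgood c' (List.mem_cons_of_mem c hc'), hgL⟩

lemma diff_club_mem (hJ : IsNormalIdeal κ l θ δ J) (hκ : ℵ₀ < κ) (hθ2 : 2 ≤ θ) (hl : 1 < l)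
    {g : List (Set Ordinal.{0}) → Set Ordinal.{0}} (hg : ∀ L, g L ∈ PSet κ l) :
    PSet κ l \ Club κ θ l δ g ∈ J := by
  refine hJ.1.subset_mem _ (hJ.1.union_mem hκ.le (hJ.1.lt_two_mem hκ.le hθ2 hl)
    (hJ.1.iUnion_nat_mem hκ fun n => hJ.bad_list_mem hκ n g hg)) _ ?_
  rintro a ⟨haP, haC⟩
  by_cases ha2 : 2 ≤ #↥(a ∩ Iio θ.ord)
  · simp only [Club, mem_ofPred_eq, not_and, not_forall] at haC
    obtain ⟨L, hL, hgL⟩ := haC haP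
    exact Or.inr (mem_iUnion.2 ⟨L.length, haP, ha2, L, rfl, hL, hgL⟩)
  · exact Or.inl ⟨haP, not_le.1 ha2⟩

end IsNormalIdeal

/-! ### The least normal ideal -/

def ClubIdeal (κ θ : Cardinal.{0}) (l δ : Ordinal.{0}) : Set (Set (Set Ordinal.{0})) :=
  {B | B ⊆ PSet κ l ∧ ∃ g : List (Set Ordinal.{0}) → Set Ordinal.{0},
    (∀ L, g L ∈ PSet κ l) ∧ B ∩ Club κ θ l δ g = ∅}

lemma sUnion_mem_clubIdeal (hκ : κ.IsRegular) {Y : Set (Set (Set Ordinal.{0}))}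
    (hY : Y ⊆ ClubIdeal κ θ l δ) (hYκ : #Y < lift.{1} κ) : ⋃₀ Y ∈ ClubIdeal κ θ l δ := by
  choose! g hgP hg using fun B (hB : B ∈ Y) => (hY hB).2
  refine ⟨sUnion_subset fun B hB => (hY hB).1, fun L => ⋃ B : Y, g B L,
    fun L => ⟨iUnion_subset fun B => (hgP B B.2 L).1, ?_⟩, ?_⟩
  · exact (card_iUnion_lt_iff_forall_of_isRegular hκ.lift hYκ).2 fun B => (hgP B B.2 L).2
  · refine eq_empty_of_forall_notMem ?_
    rintro a ⟨⟨B, hB, haB⟩, haP, haC⟩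
    exact (hg B hB).subset ⟨haB, haP, fun L hL =>
      (subset_iUnion (fun B : Y => g B L) ⟨B, hB⟩).trans (haC L hL)⟩

lemma nonCofinal_subset_clubIdeal : Ikl κ l ⊆ ClubIdeal κ θ l δ := by
  rintro B ⟨hB, a₀, ha₀, hwit⟩
  exact ⟨hB, fun _ => a₀, fun _ => ha₀,
    eq_empty_of_forall_notMem fun a ha => hwit a ha.1 (ha.2.2 [] (by simp))⟩

lemma nabla_clubIdeal_subset (hκ : ℵ₀ ≤ κ) (hθ : θ ≠ 0) (hl : 0 < l) :
    nabla κ l θ δ (ClubIdeal κ θ l δ) ⊆ ClubIdeal κ θ l δ := by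
  rintro B ⟨F, hF, hB⟩
  have h0 : {0} ∈ PSet κ l := mem_PSet_of_finite hκ (singleton_subset_iff.2 hl) (finite_singleton 0)
  have hg_ex : ∀ e, ∃ g : List (Set Ordinal.{0}) → Set Ordinal.{0}, (∀ L, g L ∈ PSet κ l) ∧
      (e ∈ PSet θ δ → F e ∩ Club κ θ l δ g = ∅) := by
    intro e
    by_cases he : e ∈ PSet θ δ
    · obtain ⟨-, g, hg⟩ := hF e he
      exact ⟨g, hg.1, fun _ => hg.2⟩
    · exact ⟨fun _ => {0}, fun _ => h0, fun h => absurd h he⟩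
  choose g hgP hg using hg_ex
  -- The value `{0}` on the empty list keeps the club away from the sets missing `θ`.
  refine ⟨fun a ha => ?_, fun | [] => {0} | e :: L => g e L, ?_, ?_⟩
  · rcases hB ha with h | h
    · exact h.1
    · obtain ⟨e, he, haF, -⟩ := mem_iUnion₂.1 h
      exact (hF e he).1 haF
  · rintro (_ | ⟨e, L⟩)
    · exact h0
    · exact hgP e L
  · refine eq_empty_of_forall_notMem ?_
    rintro a ⟨haB, haP, haC⟩
    rcases hB haB with h | h
    · exact (eq_empty_iff_forall_notMem.1 h.2) 0
        ⟨haC [] (by simp) rfl, ord_pos.2 (pos_iff_ne_zero.2 hθ)⟩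
    · obtain ⟨e, he, haF, hae⟩ := mem_iUnion₂.1 h
      refine (hg e he).subset ⟨haF, haP, fun L hL => haC (e :: L) ?_⟩
      rintro c (_ | ⟨-, hc⟩)
      · exact ⟨hae.1, hae.2.trans_le (le_mul_left aleph0_ne_zero)⟩
      · exact hL c hc

lemma isNormalIdeal_clubIdeal (hκ : κ.IsRegular) (hℵ : ℵ₀ < κ) (hθ2 : 2 ≤ θ) (hl : 1 < l)
    (hJ : IsNormalIdeal κ l θ δ J) : IsNormalIdeal κ l θ δ (ClubIdeal κ θ l δ) := by
  have hθ : θ ≠ 0 := fun h => by simp [h] at hθ2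
  refine ⟨⟨fun B hB => hB.1, ?_, fun Y hY _ hYκ => sUnion_mem_clubIdeal hκ hY hYκ,
    nonCofinal_subset_clubIdeal, ?_⟩, (subset_nabla hθ fun B hB => hB.1).antisymm
      (nabla_clubIdeal_subset hκ.aleph0_le hθ (zero_lt_one.trans hl))⟩
  · rintro B ⟨hB, g, hgP, hg⟩ C hCB
    exact ⟨hCB.trans hB, g, hgP, subset_eq_empty (inter_subset_inter_left _ hCB) hg⟩
  · rintro ⟨-, g, hgP, hg⟩
    have := hJ.diff_club_mem hℵ hθ2 hl hgP
    rw [(disjoint_iff_inter_eq_empty.2 hg).sdiff_eq_left] at this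
    exact hJ.1.univ_not_mem this

lemma IsLeastNormalIdeal.eq_clubIdeal {N : Set (Set (Set Ordinal.{0}))}
    (hN : IsLeastNormalIdeal κ l θ δ N) (hκ : κ.IsRegular) (hℵ : ℵ₀ < κ) (hθ2 : 2 ≤ θ)
    (hl : 1 < l) : N = ClubIdeal κ θ l δ := by
  refine (hN.2 _ (isNormalIdeal_clubIdeal hκ hℵ hθ2 hl hN.1)).antisymm ?_
  rintro B ⟨hB, g, hgP, hg⟩
  exact hN.1.1.subset_mem _ (hN.1.diff_club_mem hℵ hθ2 hl hgP) _
    fun a ha => ⟨hB ha, fun hC => hg.subset ⟨ha, hC⟩⟩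

/-! ### Cofinality against domination -/

lemma dNum_le_mk {μ : Cardinal.{1}} {F : Set (μ.ord.ToType → Set Ordinal.{0})}
    (hF : ∀ f ∈ F, ∀ i, f i ∈ PSet κ l)
    (hdom : ∀ g : μ.ord.ToType → Set Ordinal.{0}, (∀ i, g i ∈ PSet κ l) →
      ∃ f ∈ F, ∀ i, g i ⊆ f i) : dNum κ l μ ≤ #F :=
  csInf_le' ⟨F, rfl, hF, hdom⟩

lemma exists_mk_eq_dNum (κ : Cardinal.{0}) (l : Ordinal.{0}) (μ : Cardinal.{1}) :
    ∃ F : Set (μ.ord.ToType → Set Ordinal.{0}), #F = dNum κ l μ ∧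
      (∀ f ∈ F, ∀ i, f i ∈ PSet κ l) ∧ ∀ g : μ.ord.ToType → Set Ordinal.{0},
        (∀ i, g i ∈ PSet κ l) → ∃ f ∈ F, ∀ i, g i ⊆ f i := by
  have hne : {c | ∃ F : Set (μ.ord.ToType → Set Ordinal.{0}), #F = c ∧
      (∀ f ∈ F, ∀ i, f i ∈ PSet κ l) ∧ ∀ g : μ.ord.ToType → Set Ordinal.{0},
        (∀ i, g i ∈ PSet κ l) → ∃ f ∈ F, ∀ i, g i ⊆ f i}.Nonempty :=
    ⟨_, {f | ∀ i, f i ∈ PSet κ l}, rfl, fun _ hf => hf, fun g hg => ⟨g, hg, fun _ => subset_rfl⟩⟩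
  exact csInf_mem hne

lemma cofIdeal_le_mk {K S : Set (Set (Set Ordinal.{0}))} (hSK : S ⊆ K)
    (hS : ∀ B ∈ K, ∃ C ∈ S, B ⊆ C) : cofIdeal K ≤ #S :=
  csInf_le' ⟨S, hSK, rfl, hS⟩

lemma exists_mk_eq_cofIdeal (K : Set (Set (Set Ordinal.{0}))) :
    ∃ S ⊆ K, #S = cofIdeal K ∧ ∀ B ∈ K, ∃ C ∈ S, B ⊆ C := by
  have hne : {c | ∃ S ⊆ K, #S = c ∧ ∀ B ∈ K, ∃ C ∈ S, B ⊆ C}.Nonempty :=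
    ⟨_, K, subset_rfl, rfl, fun B hB => ⟨B, hB, subset_rfl⟩⟩
  exact csInf_mem hne

section Restrict

variable {A : Set (Set Ordinal.{0})} {g : List (Set Ordinal.{0}) → Set Ordinal.{0}}

lemma exists_mem_club_superset (hκ : ℵ₀ ≤ κ) (hA : A ⊆ PSet κ l)
    (hA' : A ∉ ClubIdeal κ θ l δ) (hg : ∀ L, g L ∈ PSet κ l) {y : Set Ordinal.{0}}
    (hy : y ∈ PSet κ l) : ∃ a ∈ A, a ∈ Club κ θ l δ g ∧ y ⊆ a := by
  by_contra! h
  -- `Club (g ∪ y)` lies inside `Club g` and, by the empty list, above `y`.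
  refine hA' ⟨hA, fun L => g L ∪ y, fun L => union_mem_PSet hκ (hg L) hy,
    eq_empty_of_forall_notMem ?_⟩
  rintro a ⟨haA, haP, haC⟩
  exact h a haA ⟨haP, fun L hL => subset_union_left.trans (haC L hL)⟩
    (subset_union_right.trans (haC [] (by simp)))

lemma diff_inter_club_mem_restrict (hg : ∀ L, g L ∈ PSet κ l) :
    PSet κ l \ (A ∩ Club κ θ l δ g) ∈ restrict κ l (ClubIdeal κ θ l δ) A :=
  ⟨sdiff_subset, fun _ ha => ha.1.1, g, hg,
    eq_empty_of_forall_notMem fun _ ⟨⟨⟨_, ha⟩, haA⟩, haC⟩ => ha ⟨haA, haC⟩⟩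

end Restrict

-- `I` codes the good lists up to covering: `list (code L)` covers `L`, and `list i` is good at
-- every point above `y i`. So the clubs `Club (f ∘ code)`, `f : I → P_κ(l)`, are cofinal among
-- all clubs, and `f` can be read off from `Club (f ∘ code)`.
structure ClubCoding (κ θ : Cardinal.{0}) (l δ : Ordinal.{0}) (I : Type*) where
  y : I → Set Ordinal.{0}
  list : I → List (Set Ordinal.{0})
  code : List (Set Ordinal.{0}) → I
  y_mem : ∀ i, y i ∈ PSet κ l
  code_list : ∀ i, code (list i) = i
  good_list : ∀ i a, y i ⊆ a → ∀ c ∈ list i, Good θ δ a c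
  good_of_y_code_subset : ∀ a ∈ PSet κ l, ∀ L, (∀ c ∈ L, Good θ δ a c) →
    ∀ b, y (code L) ⊆ b → ∀ c ∈ L, Good θ δ b c

namespace ClubCoding

variable {I : Type*} (C : ClubCoding κ θ l δ I)

lemma apply_subset_of_mem_club {f : I → Set Ordinal.{0}}
    (ha : a ∈ Club κ θ l δ (f ∘ C.code)) {i : I} (hy : C.y i ⊆ a) : f i ⊆ a := by
  simpa [C.code_list] using ha.2 (C.list i) (C.good_list i a hy)

lemma club_comp_code_subset {g : List (Set Ordinal.{0}) → Set Ordinal.{0}}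
    {p f : I → Set Ordinal.{0}} (hp : ∀ i, p i ∈ Club κ θ l δ g) (hyp : ∀ i, C.y i ⊆ p i)
    (hpf : ∀ i, p i ⊆ f i) : Club κ θ l δ (f ∘ C.code) ⊆ Club κ θ l δ g :=
  fun a ha => ⟨ha.1, fun L hL => ((hp _).2 L (C.good_of_y_code_subset a ha.1 L hL _ (hyp _))).trans
    ((hpf _).trans (ha.2 L hL))⟩

end ClubCoding

section Inequalities

variable {μ : Cardinal.{1}} {A : Set (Set Ordinal.{0})}

lemma cofIdeal_restrict_le_dNum (C : ClubCoding κ θ l δ μ.ord.ToType) (hκ : ℵ₀ ≤ κ)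
    (hA : A ⊆ PSet κ l) (hA' : A ∉ ClubIdeal κ θ l δ) :
    cofIdeal (restrict κ l (ClubIdeal κ θ l δ) A) ≤ dNum κ l μ := by
  obtain ⟨F, hFd, hFP, hFdom⟩ := exists_mk_eq_dNum κ l μ
  rw [← hFd]
  refine (cofIdeal_le_mk (S := (fun f => PSet κ l \ (A ∩ Club κ θ l δ (f ∘ C.code))) '' F)
    ?_ ?_).trans mk_image_le
  · rintro _ ⟨f, hf, rfl⟩
    exact diff_inter_club_mem_restrict fun _ => hFP f hf _
  · rintro B ⟨hB, -, g, hgP, hg⟩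
    choose p hpA hpC hyp using fun i => exists_mem_club_superset hκ hA hA' hgP (C.y_mem i)
    obtain ⟨f, hf, hpf⟩ := hFdom p fun i => hA (hpA i)
    exact ⟨_, ⟨f, hf, rfl⟩, fun a ha => ⟨hB ha, fun haAC =>
      hg.subset ⟨⟨ha, haAC.1⟩, C.club_comp_code_subset hpC hyp hpf haAC.2⟩⟩⟩

lemma dNum_le_cofIdeal_restrict (C : ClubCoding κ θ l δ μ.ord.ToType) (hκ : ℵ₀ ≤ κ)
    (hA : A ⊆ PSet κ l) (hA' : A ∉ ClubIdeal κ θ l δ) :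
    dNum κ l μ ≤ cofIdeal (restrict κ l (ClubIdeal κ θ l δ) A) := by
  obtain ⟨S, hSK, hSc, hSgen⟩ := exists_mk_eq_cofIdeal (restrict κ l (ClubIdeal κ θ l δ) A)
  choose! g hgP hg using fun B (hB : B ∈ S) => (hSK hB).2.2
  choose! p hpA hpC hyp using fun B (hB : B ∈ S) i =>
    exists_mem_club_superset hκ hA hA' (hgP B hB) (C.y_mem i)
  rw [← hSc]
  refine (dNum_le_mk (F := p '' S) ?_ fun h hh => ?_).trans mk_image_le
  · rintro _ ⟨B, hB, rfl⟩ i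
    exact hA (hpA B hB i)
  obtain ⟨B, hB, hDB⟩ := hSgen _ (diff_inter_club_mem_restrict (g := h ∘ C.code) fun _ => hh _)
  refine ⟨p B, ⟨B, hB, rfl⟩, fun i => C.apply_subset_of_mem_club ?_ (hyp B hB i)⟩
  by_contra hnot
  exact (hg B hB).subset
    ⟨⟨hDB ⟨hA (hpA B hB i), fun h' => hnot h'.2⟩, hpA B hB i⟩, hpC B hB i⟩

end Inequalities

/-! ### Coding good lists by `u(θ̄·ℵ₀, |δ|)` -/

lemma thetaBar_of_or (h : θ < κ ∨ Order.IsSuccLimit κ) : thetaBar κ θ = θ := by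
  rw [thetaBar, if_pos h]

lemma thetaBar_of_not (h : ¬ (θ < κ ∨ Order.IsSuccLimit κ)) (hκ : κ ≠ 0) :
    ∃ ν, Order.succ ν = κ ∧ thetaBar κ θ = ν := by
  have hpre : ¬ Order.IsSuccPrelimit κ :=
    fun hp => h (Or.inr (Order.isSuccLimit_iff_of_orderBot.2 ⟨hκ, hp⟩))
  obtain ⟨ν, hν⟩ := Order.not_isSuccPrelimit_iff_mem_range_succ.1 hpre
  have hset : {ν' | Order.succ ν' = κ} = {ν} := by
    ext ν'
    simp [← hν, Order.succ_injective.eq_iff]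
  exact ⟨ν, hν, by rw [thetaBar, if_neg h, hset, csSup_singleton]⟩

lemma thetaBar_le (hκ : κ ≠ 0) : thetaBar κ θ ≤ θ := by
  by_cases h : θ < κ ∨ Order.IsSuccLimit κ
  · exact (thetaBar_of_or h).le
  · obtain ⟨ν, hν, hbar⟩ := thetaBar_of_not h hκ
    rw [hbar]
    exact ((Order.lt_succ ν).trans_le (hν.trans_le (not_lt.1 (not_or.1 h).1))).le

lemma le_thetaBar {σ : Cardinal.{0}} (hσθ : σ ≤ θ) (hσκ : σ < κ) : σ ≤ thetaBar κ θ := by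
  by_cases h : θ < κ ∨ Order.IsSuccLimit κ
  · rwa [thetaBar_of_or h]
  · obtain ⟨ν, hν, hbar⟩ := thetaBar_of_not h (pos_of_gt hσκ).ne'
    rwa [hbar, ← Order.lt_succ_iff, hν]

lemma succ_lt_of_lt_thetaBar (hθκ : θ ≤ κ) (hκ : κ ≠ 0) {ρ : Cardinal.{0}}
    (hρ : ρ < thetaBar κ θ) : Order.succ ρ < κ := by
  by_cases h : θ < κ ∨ Order.IsSuccLimit κ
  · rw [thetaBar_of_or h] at hρ
    rcases h with h | h
    · exact (Order.succ_le_of_lt hρ).trans_lt h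
    · exact h.succ_lt (hρ.trans_le hθκ)
  · obtain ⟨ν, hν, hbar⟩ := thetaBar_of_not h hκ
    rw [hbar] at hρ
    rw [← hν]
    exact Order.succ_lt_succ_iff.2 hρ

lemma exists_lt_aleph0_mul (hθ : θ ≠ 0) (hθκ : θ ≤ κ) (hκ : ℵ₀ ≤ κ) {ρ : Cardinal.{0}}
    (hρ : ρ < thetaBar κ θ * ℵ₀) : ∃ σ ≤ θ, σ < κ ∧ ρ < ℵ₀ * σ := by
  have hκ0 : κ ≠ 0 := (aleph0_pos.trans_le hκ).ne'
  by_cases hρℵ : ρ < ℵ₀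
  · exact ⟨1, Cardinal.one_le_iff_ne_zero.2 hθ, one_lt_aleph0.trans_le hκ, by rwa [mul_one]⟩
  have hρθ : ρ < thetaBar κ θ := by
    by_contra! h
    exact ((mul_le_max _ _).trans (max_le (max_le h (not_lt.1 hρℵ)) (not_lt.1 hρℵ))).not_gt hρ
  exact ⟨Order.succ ρ, (Order.succ_le_of_lt hρθ).trans (thetaBar_le hκ0),
    succ_lt_of_lt_thetaBar hθκ hκ0 hρθ, (Order.lt_succ ρ).trans_le (le_mul_left aleph0_ne_zero)⟩

lemma aleph0_mul_mk_inter_le (ha : a ∈ PSet κ l) :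
    ℵ₀ * #↥(a ∩ Iio θ.ord) ≤ lift.{1} (thetaBar κ θ * ℵ₀) := by
  obtain ⟨σ, hσ⟩ := mem_range_lift_of_le (mk_inter_Iio_ord_le (θ := θ) a)
  have hσθ : σ ≤ θ := lift_le.1 (hσ ▸ mk_inter_Iio_ord_le a)
  have hσκ : σ < κ := lift_lt.1 (hσ ▸ (mk_le_mk_of_subset inter_subset_left).trans_lt ha.2)
  rw [← hσ, mul_comm, lift_mul, lift_aleph0]
  gcongr
  exact lift_le.2 (le_thetaBar hσθ hσκ)

lemma Good.mk_lt {c : Set Ordinal.{0}} (ha : a ∈ PSet κ l) (hc : Good θ δ a c) :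
    #c < lift.{1} (thetaBar κ θ * ℵ₀) :=
  hc.2.trans_le (aleph0_mul_mk_inter_le ha)

lemma exists_witness (hθ : θ ≠ 0) (hθκ : θ ≤ κ) (hκ : ℵ₀ ≤ κ) (hθl : θ.ord ≤ l)
    (x : Set Ordinal.{0}) : ∃ w ∈ PSet κ l, #x < lift.{1} (thetaBar κ θ * ℵ₀) →
      ∀ b, w ⊆ b → #x < ℵ₀ * #↥(b ∩ Iio θ.ord) := by
  by_cases hx : #x < lift.{1} (thetaBar κ θ * ℵ₀)
  · obtain ⟨ρ, hρ⟩ := mem_range_lift_of_le hx.le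
    obtain ⟨σ, hσθ, hσκ, hρσ⟩ := exists_lt_aleph0_mul hθ hθκ hκ (lift_lt.1 (hρ ▸ hx))
    obtain ⟨w, hwθ, hw⟩ :=
      le_mk_iff_exists_subset.1 (show lift.{1} σ ≤ #↥(Iio θ.ord) by simpa using hσθ)
    refine ⟨w, ⟨hwθ.trans (Iio_subset_Iio hθl), hw ▸ lift_lt.2 hσκ⟩, fun _ b hb => ?_⟩
    calc #x = lift.{1} ρ := hρ.symm
      _ < lift.{1} (ℵ₀ * σ) := lift_lt.2 hρσ
      _ = ℵ₀ * #w := by rw [lift_mul, lift_aleph0, hw]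
      _ ≤ ℵ₀ * #↥(b ∩ Iio θ.ord) := by gcongr; exact mk_le_mk_of_subset (subset_inter hb hwθ)
  · exact ⟨∅, empty_mem_PSet (aleph0_pos.trans_le hκ).ne', fun h => absurd h hx⟩

def IsCofinalFamily {α : Type*} (ρ : Cardinal) (s : Set α) (X : Set (Set α)) : Prop :=
  (∀ x ∈ X, x ⊆ s ∧ #x < ρ) ∧ ∀ c ⊆ s, #c < ρ → ∃ x ∈ X, c ⊆ x

lemma IsCofinalFamily.exists_of_equiv {α β : Type u} {ρ : Cardinal} {s : Set α} {t : Set β}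
    {X : Set (Set α)} (hX : IsCofinalFamily ρ s X) (e : s ≃ t) :
    ∃ Y, IsCofinalFamily ρ t Y ∧ #Y ≤ #X := by
  let tr (x : Set α) : Set β := (↑) '' (e '' ((↑) ⁻¹' x))
  have htr : ∀ x, #(tr x) ≤ #x := fun x => mk_image_le.trans
    (mk_image_le.trans (mk_preimage_of_injective _ _ Subtype.val_injective))
  refine ⟨tr '' X, ⟨?_, fun c hc hcρ => ?_⟩, mk_image_le⟩
  · rintro _ ⟨x, hx, rfl⟩
    exact ⟨image_subset_iff.2 fun b _ => b.2, (htr x).trans_lt (hX.1 x hx).2⟩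
  let c' : Set α := (↑) '' (e.symm '' ((↑) ⁻¹' c))
  obtain ⟨x, hx, hc'x⟩ := hX.2 c' (image_subset_iff.2 fun b _ => b.2)
    (mk_image_le.trans_lt (mk_image_le.trans_lt
      ((mk_preimage_of_injective _ _ Subtype.val_injective).trans_lt hcρ)))
  refine ⟨tr x, mem_image_of_mem _ hx, fun b hb => ?_⟩
  lift b to t using hc hb
  exact ⟨b, ⟨e.symm b, hc'x ⟨e.symm b, ⟨b, hb, rfl⟩, rfl⟩, e.apply_symm_apply b⟩, rfl⟩

lemma IsCofinalFamily.aleph0_le_mk {α : Type*} {ρ κ : Cardinal} {s : Set α} {X : Set (Set α)}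
    (hX : IsCofinalFamily ρ s X) (hκ : κ.IsRegular) (hρκ : ρ ≤ κ) (hρ : 1 < ρ) (hs : κ ≤ #s) :
    ℵ₀ ≤ #X := by
  by_contra! hX_fin
  have hcover : s ⊆ ⋃ x ∈ X, x := fun b hb => by
    obtain ⟨x, hx, hbx⟩ := hX.2 {b} (singleton_subset_iff.2 hb) (by simpa using hρ)
    exact mem_biUnion hx (hbx rfl)
  have hsmall : #↥(⋃ x ∈ X, x) < κ :=
    (card_biUnion_lt_iff_forall_of_isRegular hκ (hX_fin.trans_le hκ.aleph0_le)).2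
      fun x hx => (hX.1 x hx).2.trans_le hρκ
  exact (hs.trans (mk_le_mk_of_subset hcover)).not_gt hsmall

lemma uNum_le_mk {ρ μ : Cardinal.{0}} {X : Set (Set Ordinal.{0})}
    (hX : IsCofinalFamily (lift.{1} ρ) (Iio μ.ord) X) : uNum ρ μ ≤ #X :=
  csInf_le' ⟨X, fun x hx => hX.1 x hx, rfl, fun e he => hX.2 e he.1 he.2⟩

lemma exists_isCofinalFamily_mk_eq_uNum (ρ μ : Cardinal.{0}) :
    ∃ X, IsCofinalFamily (lift.{1} ρ) (Iio μ.ord) X ∧ #X = uNum ρ μ := by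
  have hne : {c | ∃ X ⊆ PSet ρ μ.ord, #X = c ∧ ∀ e ∈ PSet ρ μ.ord, ∃ x ∈ X, e ⊆ x}.Nonempty :=
    ⟨_, _, subset_rfl, rfl, fun e he => ⟨e, he, subset_rfl⟩⟩
  obtain ⟨X, hXP, hX, hXcof⟩ := csInf_mem hne
  exact ⟨X, ⟨fun x hx => hXP hx, fun c hc hcρ => hXcof c ⟨hc, hcρ⟩⟩, hX⟩

lemma exists_isCofinalFamily_Iio (ρ : Cardinal.{0}) (δ : Ordinal.{0}) :
    ∃ X, IsCofinalFamily (lift.{1} ρ) (Iio δ) X ∧ #X = uNum ρ δ.card := by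
  obtain ⟨e⟩ : Nonempty (Iio δ.card.ord ≃ Iio δ) := Cardinal.eq.1 (by simp [mk_Iio_ordinal])
  obtain ⟨X₀, hX₀, hX₀u⟩ := exists_isCofinalFamily_mk_eq_uNum ρ δ.card
  obtain ⟨X, hX, hXX₀⟩ := IsCofinalFamily.exists_of_equiv hX₀ e
  obtain ⟨X₁, hX₁, hX₁X⟩ := IsCofinalFamily.exists_of_equiv hX e.symm
  exact ⟨X, hX, (hXX₀.trans_eq hX₀u).antisymm ((uNum_le_mk hX₁).trans hX₁X)⟩

lemma nonempty_clubCoding (hκ : κ.IsRegular) (hθ2 : 2 ≤ θ) (hθκ : θ ≤ κ) (hκδ : κ.ord ≤ δ)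
    (hδl : δ ≤ l) :
    Nonempty (ClubCoding κ θ l δ (uNum (thetaBar κ θ * ℵ₀) δ.card).ord.ToType) := by
  set τ := thetaBar κ θ * ℵ₀
  have hθ : θ ≠ 0 := fun h => by simp [h] at hθ2
  have hκ0 : κ ≠ 0 := (aleph0_pos.trans_le hκ.aleph0_le).ne'
  have hτκ : τ ≤ κ := (mul_le_max _ _).trans
    (max_le (max_le ((thetaBar_le hκ0).trans hθκ) hκ.aleph0_le) hκ.aleph0_le)
  have hτ : 1 < τ := one_lt_aleph0.trans_le (le_mul_left (Cardinal.one_le_iff_ne_zero.1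
    (le_thetaBar (Cardinal.one_le_iff_ne_zero.2 hθ) (one_lt_aleph0.trans_le hκ.aleph0_le))))
  obtain ⟨X, hX, hXu⟩ := exists_isCofinalFamily_Iio τ δ
  have : Infinite X := infinite_iff.2 (hX.aleph0_le_mk hκ.lift (lift_le.2 hτκ) (by simpa using hτ)
    (by rw [mk_Iio_ordinal, lift_le]; simpa using Ordinal.card_le_card hκδ))
  obtain ⟨ψ⟩ : Nonempty ((uNum τ δ.card).ord.ToType ≃ List X) :=
    Cardinal.eq.1 (by rw [mk_toType, card_ord, mk_list_eq_mk, hXu])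
  have hXP : ∀ x ∈ X, x ∈ PSet κ l := fun x hx =>
    ⟨(hX.1 x hx).1.trans (Iio_subset_Iio hδl), (hX.1 x hx).2.trans_le (lift_le.2 hτκ)⟩
  choose wit hwitP hwit using exists_witness (l := l) hθ hθκ hκ.aleph0_le
    ((ord_le_ord.2 hθκ).trans (hκδ.trans hδl))
  have hcover : ∀ c, ∃ x : X, (c ⊆ Iio δ → #c < lift.{1} τ → c ⊆ x) ∧ (c ∈ X → x.1 = c) := by
    intro c
    by_cases hc : c ∈ X
    · exact ⟨⟨c, hc⟩, fun _ _ => subset_rfl, fun _ => rfl⟩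
    by_cases hcs : c ⊆ Iio δ ∧ #c < lift.{1} τ
    · obtain ⟨x, hx, hcx⟩ := hX.2 c hcs.1 hcs.2
      exact ⟨⟨x, hx⟩, fun _ _ => hcx, fun h => absurd h hc⟩
    · exact ⟨Classical.arbitrary _, fun h₁ h₂ => absurd ⟨h₁, h₂⟩ hcs, fun h => absurd h hc⟩
  choose cover hcover_sub hcover_eq using hcover
  have hgood : ∀ (x : X) a, x.1 ∪ wit x ⊆ a → Good θ δ a x := fun x a h =>
    ⟨subset_inter (subset_union_left.trans h) (hX.1 x x.2).1,
      hwit x (hX.1 x x.2).2 a (subset_union_right.trans h)⟩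
  refine ⟨{
    y := fun i => ⋃ x ∈ ψ i, (x.1 ∪ wit x)
    list := fun i => (ψ i).map Subtype.val
    code := fun L => ψ.symm (L.map cover)
    y_mem := fun i => biUnion_list_mem_PSet hκ.aleph0_le _ _
      fun x _ => union_mem_PSet hκ.aleph0_le (hXP x x.2) (hwitP x)
    code_list := fun i => ?_
    good_list := fun i a ha c hc => ?_
    good_of_y_code_subset := fun a ha L hL b hb c hc => ?_ }⟩
  · have : cover ∘ Subtype.val = id := funext fun x => Subtype.ext (hcover_eq x x.2)
    simp only [List.map_map, this, List.map_id, Equiv.symm_apply_apply]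
  · obtain ⟨x, hx, rfl⟩ := List.mem_map.1 hc
    exact hgood x a ((subset_iUnion₂ (s := fun x (_ : x ∈ ψ i) => x.1 ∪ wit x) x hx).trans ha)
  · have hcx := hcover_sub c ((hL c hc).1.trans inter_subset_right) ((hL c hc).mk_lt ha)
    have hmem : cover c ∈ ψ (ψ.symm (L.map cover)) := by
      simpa using List.mem_map_of_mem hc
    have := hgood (cover c) b
      ((subset_iUnion₂ (s := fun x (_ : x ∈ ψ (ψ.symm (L.map cover))) => x.1 ∪ wit x)
        (cover c) hmem).trans hb)
    exact ⟨hcx.trans this.1, (mk_le_mk_of_subset hcx).trans_lt this.2⟩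

theorem stmt1_general (κ lam θ : Cardinal.{0}) (δ : Ordinal.{0})
    (hκ : κ.IsRegular) (hθ2 : 2 ≤ θ) (hθκ : θ ≤ κ)
    (hdl : δ ≤ lam.ord) (hκδ : κ.ord ≤ δ) :
    ∀ N, IsLeastNormalIdeal κ lam.ord θ δ N →
      ∀ A ∈ plus κ lam.ord N,
        cofIdeal (restrict κ lam.ord N A) =
          dNum κ lam.ord (uNum (thetaBar κ θ * ℵ₀) δ.card) := by
  intro N hN A hA
  have hωδ : Ordinal.omega0 ≤ δ := (ord_aleph0 ▸ ord_le_ord.2 hκ.aleph0_le).trans hκδ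
  have hℵ : ℵ₀ < κ := aleph0_lt_of_isNormalIdeal hκ.aleph0_le hθ2 hθκ hωδ hdl hN.1
  have hl : 1 < lam.ord := Ordinal.one_lt_omega0.trans_le (hωδ.trans hdl)
  rw [hN.eq_clubIdeal hκ hℵ hθ2 hl] at hA ⊢
  obtain ⟨C⟩ := nonempty_clubCoding hκ hθ2 hθκ hκδ hdl
  exact (cofIdeal_restrict_le_dNum C hκ.aleph0_le hA.1 hA.2).antisymm
    (dNum_le_cofIdeal_restrict C hκ.aleph0_le hA.1 hA.2)

/-- Assume `δ ≥ κ` and there exists a `[δ]^{<θ}`-normal ideal on `P_κ(λ)`.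
Then for every `A ∈ (NS^{[δ]^{<θ}}_{κ,λ})⁺`,
`cof(NS^{[δ]^{<θ}}_{κ,λ} | A) = 𝔡^{u(θ̄·ℵ₀, |δ|)}_{κ,λ}`. -/
theorem stmt1 (κ lam θ : Cardinal.{0}) (δ : Ordinal.{0})
    (hκ : κ.IsRegular) (hkl : κ ≤ lam) (hθ2 : 2 ≤ θ) (hθκ : θ ≤ κ)
    (hδ1 : 1 ≤ δ) (hdl : δ ≤ lam.ord) (hκδ : κ.ord ≤ δ)
    (hex : ∃ J, IsNormalIdeal κ lam.ord θ δ J) :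
    ∀ N, IsLeastNormalIdeal κ lam.ord θ δ N →
      ∀ A ∈ plus κ lam.ord N,
        cofIdeal (restrict κ lam.ord N A) =
          dNum κ lam.ord (uNum (thetaBar κ θ * ℵ₀) δ.card) :=
  stmt1_general κ lam θ δ hκ hθ2 hθκ hdl hκδ

end PklNormal
end

section
/- Assume κ = ω. Then there exists a [δ]^{<θ}-normal ideal on P_ω(λ) if and only if δ < ω. -/
open Cardinal Set

namespace PklNormal

/-!
If `δ < ω` then `P_θ(δ)` is finite, so a diagonal union `∇^{[δ]^{<θ}}` is a finite union
and every ideal on `P_ω(λ)` is `[δ]^{<θ}`-normal; `I_{ω,λ}` is one.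

If `ω ≤ δ`, the whole of `P_ω(λ)` is a diagonal union of non-cofinal sets. A set `a`
containing `0` and `1` has at least two elements below `θ`, so it may be indexed by the
singleton `{n}`, where `n` is the largest natural number in `a`; and `a` avoids the finite set
`{0, 1, n + 1}`. Any other `a` is indexed by `∅` and avoids `{0, 1}`.
-/

lemma mk_lt_lift_aleph0_iff {α : Type 1} {s : Set α} :
    #s < Cardinal.lift.{1} (ℵ₀ : Cardinal.{0}) ↔ s.Finite := by
  rw [Cardinal.lift_aleph0]
  exact Cardinal.lt_aleph0_iff_set_finite

lemma empty_mem_PSet_s6 {θ : Cardinal.{0}} (hθ : θ ≠ 0) (γ : Ordinal.{0}) :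
    (∅ : Set Ordinal.{0}) ∈ PSet θ γ :=
  ⟨empty_subset _, by simpa [pos_iff_ne_zero] using hθ⟩

lemma PSet_finite_of_lt_omega0 (θ : Cardinal.{0}) {γ : Ordinal.{0}}
    (hγ : γ < Ordinal.omega0) : (PSet θ γ).Finite := by
  have hIio : (Iio γ).Finite := by
    rw [← Cardinal.lt_aleph0_iff_set_finite, Cardinal.mk_Iio_ordinal, Cardinal.lift_lt_aleph0]
    exact Ordinal.card_lt_aleph0.mpr hγ
  exact hIio.finite_subsets.subset fun e he => he.1

lemma finite_of_mem_PSet {κ : Cardinal.{0}} {l : Ordinal.{0}} {a : Set Ordinal.{0}}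
    (hκ : κ ≤ ℵ₀) (ha : a ∈ PSet κ l) : a.Finite :=
  mk_lt_lift_aleph0_iff.mp (ha.2.trans_le (Cardinal.lift_le.mpr hκ))

lemma inP_empty {σ : Cardinal.{0}} {γ : Ordinal.{0}} {a : Set Ordinal.{0}}
    (ha : (a ∩ Iio σ.ord).Nonempty) : inP σ γ a ∅ :=
  ⟨empty_subset _, by simpa [pos_iff_ne_zero, Cardinal.mk_ne_zero_iff] using ha.to_subtype⟩

lemma sep_not_superset_mem_Ikl {κ : Cardinal.{0}} {l : Ordinal.{0}} {c : Set Ordinal.{0}}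
    (hc : c ∈ PSet κ l) : {a | a ∈ PSet κ l ∧ ¬ c ⊆ a} ∈ Ikl κ l :=
  ⟨fun _ ha => ha.1, c, hc, fun _ hb => hb.2⟩

lemma isIdeal_Ikl_aleph0 (l : Ordinal.{0}) : IsIdeal ℵ₀ l (Ikl ℵ₀ l) where
  mem_subset _ hB := hB.1
  subset_mem := by
    rintro B ⟨hBP, a, ha, hB⟩ C hCB
    exact ⟨hCB.trans hBP, a, ha, fun b hb => hB b (hCB hb)⟩
  sUnion_mem := by
    intro Y hY _ hYcard
    have : Finite Y := (mk_lt_lift_aleph0_iff.mp hYcard).to_subtype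
    choose w hw hwB using fun B : Y => (hY B.2).2
    have hw_union : ⋃ B : Y, w B ∈ PSet ℵ₀ l :=
      ⟨iUnion_subset fun B => (hw B).1,
        mk_lt_lift_aleph0_iff.mpr (finite_iUnion fun B => finite_of_mem_PSet le_rfl (hw B))⟩
    refine ⟨sUnion_subset fun B hB => (hY hB).1, ⋃ B : Y, w B, hw_union, ?_⟩
    rintro b ⟨B, hB, hbB⟩ hsub
    exact hwB ⟨B, hB⟩ b hbB ((subset_iUnion (fun B : Y => w B) ⟨B, hB⟩).trans hsub)
  nonCofinal_subset _ hB := hB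
  univ_not_mem := fun ⟨_, a, ha, hB⟩ => hB a ha subset_rfl

lemma nabla_mono {κ σ : Cardinal.{0}} {l γ : Ordinal.{0}} {J K : Set (Set (Set Ordinal.{0}))}
    (hJK : J ⊆ K) : nabla κ l σ γ J ⊆ nabla κ l σ γ K :=
  fun _ ⟨F, hF, hB⟩ => ⟨F, fun e he => hJK (hF e he), hB⟩

namespace IsIdeal

variable {κ θ : Cardinal.{0}} {l γ : Ordinal.{0}} {J : Set (Set (Set Ordinal.{0}))}

lemma sUnion_mem_of_finite (hJ : IsIdeal κ l J) (hκ : ℵ₀ ≤ κ)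
    {Y : Set (Set (Set Ordinal.{0}))} (hYJ : Y ⊆ J) (hY : Y.Nonempty) (hYfin : Y.Finite) :
    ⋃₀ Y ∈ J :=
  hJ.sUnion_mem Y hYJ hY <|
    (mk_lt_lift_aleph0_iff.mpr hYfin).trans_le (Cardinal.lift_le.{1}.mpr hκ)

lemma subset_nabla (hJ : IsIdeal κ l J) (hθ : θ ≠ 0) : J ⊆ nabla κ l θ γ J := by
  intro B hB
  refine ⟨fun _ => B, fun _ _ => hB, fun a ha => ?_⟩
  by_cases h : a ∩ Iio θ.ord = ∅
  · exact Or.inl ⟨hJ.mem_subset B hB ha, h⟩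
  · exact Or.inr (mem_iUnion₂.mpr
      ⟨∅, empty_mem_PSet_s6 hθ γ, ha, inP_empty (nonempty_iff_ne_empty.mpr h)⟩)

lemma nabla_subset (hJ : IsIdeal κ l J) (hκ : ℵ₀ ≤ κ) (hl : 0 < l) (hθ : θ ≠ 0)
    (hfin : (PSet θ γ).Finite) : nabla κ l θ γ J ⊆ J := by
  rintro B ⟨F, hF, hB⟩
  set D := {a | a ∈ PSet κ l ∧ ¬ {0} ⊆ a}
  have hD : D ∈ J := hJ.nonCofinal_subset <| sep_not_superset_mem_Ikl
    ⟨singleton_subset_iff.mpr hl, by simpa using one_lt_aleph0.trans_le hκ⟩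
  have hθ0 : (0 : Ordinal) < θ.ord := Cardinal.ord_pos.mpr (pos_iff_ne_zero.mpr hθ)
  have hcover : B ⊆ ⋃₀ insert D (F '' PSet θ γ) := by
    intro a ha
    rcases hB ha with ⟨haP, ha0⟩ | ha
    · exact ⟨D, mem_insert _ _, haP, fun h0 => (eq_empty_iff_forall_notMem.mp ha0) 0
        ⟨singleton_subset_iff.mp h0, hθ0⟩⟩
    · obtain ⟨e, he, haF, -⟩ := mem_iUnion₂.mp ha
      exact ⟨F e, mem_insert_of_mem _ (mem_image_of_mem F he), haF⟩
  exact hJ.subset_mem _ (hJ.sUnion_mem_of_finite hκ (insert_subset hD (image_subset_iff.mpr hF))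
    (insert_nonempty _ _) ((hfin.image F).insert D)) B hcover

lemma isNormal_of_lt_omega0 (hJ : IsIdeal κ l J) (hκ : ℵ₀ ≤ κ) (hl : 0 < l)
    (hθ : θ ≠ 0) (hγ : γ < Ordinal.omega0) : IsNormal κ l θ γ J :=
  (hJ.subset_nabla hθ).antisymm (hJ.nabla_subset hκ hl hθ (PSet_finite_of_lt_omega0 θ hγ))

end IsIdeal

lemma exists_mem_lt_omega0_succ_notMem {a : Set Ordinal.{0}} (ha : a.Finite) (h0 : 0 ∈ a) :
    ∃ n ∈ a, n < Ordinal.omega0 ∧ Order.succ n ∉ a := by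
  obtain ⟨n, ⟨hna, hnω⟩, hmax⟩ :=
    (ha.inter_of_left (Iio Ordinal.omega0)).exists_maximal ⟨0, h0, Ordinal.omega0_pos⟩
  refine ⟨n, hna, hnω, fun hsucc => ?_⟩
  have hsuccω : Order.succ n < Ordinal.omega0 := Ordinal.isSuccLimit_omega0.succ_lt hnω
  exact (Order.lt_succ n).not_ge (hmax ⟨hsucc, hsuccω⟩ (Order.le_succ n))

def avoidSet (e : Set Ordinal.{0}) : Set Ordinal.{0} :=
  insert 0 (insert 1 (Order.succ '' (e ∩ Iio Ordinal.omega0)))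

lemma avoidSet_mem_PSet {l : Ordinal.{0}} {e : Set Ordinal.{0}} (hl : Ordinal.omega0 ≤ l)
    (he : e.Finite) : avoidSet e ∈ PSet ℵ₀ l := by
  refine ⟨fun x hx => lt_of_lt_of_le ?_ hl, mk_lt_lift_aleph0_iff.mpr ?_⟩
  · rcases hx with rfl | rfl | ⟨n, ⟨-, hn⟩, rfl⟩
    exacts [Ordinal.omega0_pos, Ordinal.one_lt_omega0, Ordinal.isSuccLimit_omega0.succ_lt hn]
  · exact ((he.inter_of_left _).image _).insert _ |>.insert _

lemma PSet_mem_nabla_Ikl {l δ : Ordinal.{0}} {θ : Cardinal.{0}} (hl : Ordinal.omega0 ≤ l)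
    (hθ2 : 2 ≤ θ) (hθ : θ ≤ ℵ₀) (hδ : Ordinal.omega0 ≤ δ) :
    PSet ℵ₀ l ∈ nabla ℵ₀ l θ δ (Ikl ℵ₀ l) := by
  have hθ1 : (1 : Ordinal) < θ.ord := by
    simpa using Cardinal.ord_le_ord.mpr hθ2 |>.trans_lt' (by simp)
  refine ⟨fun e => {a | a ∈ PSet ℵ₀ l ∧ ¬ avoidSet e ⊆ a},
    fun e he => sep_not_superset_mem_Ikl (avoidSet_mem_PSet hl (finite_of_mem_PSet hθ he)),
    fun a ha => ?_⟩
  by_cases hθa : a ∩ Iio θ.ord = ∅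
  · exact Or.inl ⟨ha, hθa⟩
  refine Or.inr (mem_iUnion₂.mpr ?_)
  by_cases h01 : 0 ∈ a ∧ 1 ∈ a
  · obtain ⟨n, hna, hnω, hsucc⟩ :=
      exists_mem_lt_omega0_succ_notMem (finite_of_mem_PSet le_rfl ha) h01.1
    have hnδ : n < δ := hnω.trans_le hδ
    have hn : {n} ∈ PSet θ δ :=
      ⟨singleton_subset_iff.mpr hnδ, by simpa using Cardinal.one_lt_two.trans_le hθ2⟩
    have havoid : ¬ avoidSet {n} ⊆ a := fun h => hsucc (h (by simp [avoidSet, hnω]))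
    have htwo : 1 < #↥(a ∩ Iio θ.ord) := by
      rw [Cardinal.one_lt_iff_nontrivial, nontrivial_coe_sort]
      exact ⟨0, ⟨h01.1, hθ1.trans' zero_lt_one⟩, 1, ⟨h01.2, hθ1⟩, zero_ne_one⟩
    exact ⟨{n}, hn, ⟨ha, havoid⟩, singleton_subset_iff.mpr ⟨hna, hnδ⟩,
      by rwa [Cardinal.mk_singleton]⟩
  · have havoid : ¬ avoidSet ∅ ⊆ a :=
      fun h => h01 ⟨h (by simp [avoidSet]), h (by simp [avoidSet])⟩
    exact ⟨∅, empty_mem_PSet_s6 (two_pos.trans_le hθ2).ne' δ, ⟨ha, havoid⟩,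
      inP_empty (nonempty_iff_ne_empty.mpr hθa)⟩

lemma not_isNormalIdeal_of_omega0_le {l δ : Ordinal.{0}} {θ : Cardinal.{0}}
    {J : Set (Set (Set Ordinal.{0}))} (hl : Ordinal.omega0 ≤ l) (hθ2 : 2 ≤ θ)
    (hθ : θ ≤ ℵ₀) (hδ : Ordinal.omega0 ≤ δ) : ¬ IsNormalIdeal ℵ₀ l θ δ J := by
  rintro ⟨hJ, hJnormal⟩
  refine hJ.univ_not_mem ?_
  rw [hJnormal]
  exact nabla_mono hJ.nonCofinal_subset (PSet_mem_nabla_Ikl hl hθ2 hθ hδ)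

theorem stmt6_general (lam θ : Cardinal.{0}) (δ : Ordinal.{0})
    (hkl : ℵ₀ ≤ lam) (hθ2 : 2 ≤ θ) (hθκ : θ ≤ ℵ₀) :
    (∃ J, IsNormalIdeal ℵ₀ lam.ord θ δ J) ↔ δ < Ordinal.omega0 := by
  have hωl : Ordinal.omega0 ≤ lam.ord := by
    simpa using Cardinal.ord_le_ord.mpr hkl
  have hθ0 : θ ≠ 0 := (two_pos.trans_le hθ2).ne'
  constructor
  · rintro ⟨J, hJ⟩
    by_contra! hδ
    exact not_isNormalIdeal_of_omega0_le hωl hθ2 hθκ hδ hJ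
  · intro hδ
    have hIkl := isIdeal_Ikl_aleph0 lam.ord
    exact ⟨Ikl ℵ₀ lam.ord, hIkl,
      hIkl.isNormal_of_lt_omega0 le_rfl (Ordinal.omega0_pos.trans_le hωl) hθ0 hδ⟩

/-- Assume `κ = ω`. Then there exists a `[δ]^{<θ}`-normal ideal on `P_ω(λ)` iff
`δ < ω`. -/
theorem stmt6 (lam θ : Cardinal.{0}) (δ : Ordinal.{0})
    (hkl : ℵ₀ ≤ lam) (hθ2 : 2 ≤ θ) (hθκ : θ ≤ ℵ₀)
    (hδ1 : 1 ≤ δ) (hdl : δ ≤ lam.ord) :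
    (∃ J, IsNormalIdeal ℵ₀ lam.ord θ δ J) ↔ δ < Ordinal.omega0 :=
  stmt6_general lam θ δ hkl hθ2 hθκ

end PklNormal
end
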